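/- arXiv:1005.3701 — 2 statements merged into one kernel-verified Lean document; each statement's English description precedes it below -/
import Mathlib

section
/- If X ⊆ ℕ has positive upper density, then the difference set X - X has positive lower density; more precisely, there exists a finite set T of integers with |T| ≤ 1/d̄(X) such that T + (X - X) = ℤ, so the gaps of X - X are bounded. -/
/-!
Take a maximal finite set `T` of integers no two of which differ by an element of `X - X`.
The translates `t + X`, `t ∈ T`, are pairwise disjoint, so counting them inside `[1 - M, n + M]`
(where `|t| ≤ M` on `T`) gives `|T| · d̄(X) ≤ 1`; in particular such maximal sets exist. By
maximality and the symmetry of `X - X`, every integer lies in `T + (X - X)`, so every interval of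
length `2M + 1` contains a positive element of `X - X`, whence `d(X - X) ≥ 1 / (2M + 1)`.
-/

open scoped Classical

/-- Upper density of a set of natural numbers. -/
noncomputable def upperDensity (A : Set ℕ) : ℝ :=
  Filter.atTop.limsup fun n => (((Finset.Icc 1 n).filter fun m => m ∈ A).card : ℝ) / n

/-- Lower density of a set of natural numbers. -/
noncomputable def lowerDensity (A : Set ℕ) : ℝ :=
  Filter.atTop.liminf fun n => (((Finset.Icc 1 n).filter fun m => m ∈ A).card : ℝ) / n

open Filter Finset

/-- `upperDensity A` and `lowerDensity A` are the `limsup` and `liminf` of `countUpTo A n / n`. -/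
noncomputable def countUpTo (A : Set ℕ) (n : ℕ) : ℕ :=
  ((Icc 1 n).filter fun m => m ∈ A).card

lemma countUpTo_le (A : Set ℕ) (n : ℕ) : countUpTo A n ≤ n :=
  (card_filter_le _ _).trans (by simp)

lemma countUpTo_mono (A : Set ℕ) : Monotone (countUpTo A) := fun _ _ hmn =>
  card_le_card (filter_subset_filter _ (Icc_subset_Icc_right hmn))

lemma countUpTo_div_nonneg (A : Set ℕ) (n : ℕ) : 0 ≤ (countUpTo A n : ℝ) / n := by positivity

lemma countUpTo_div_le_one (A : Set ℕ) (n : ℕ) : (countUpTo A n : ℝ) / n ≤ 1 :=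
  div_le_one_of_le₀ (by exact_mod_cast countUpTo_le A n) n.cast_nonneg

lemma tendsto_add_mul_one_div (α C : ℝ) :
    Tendsto (fun n : ℕ => α + C * (1 / (n : ℝ))) atTop (nhds α) := by
  simpa using tendsto_const_nhds.add
    (tendsto_const_nhds.mul (tendsto_one_div_atTop_nhds_zero_nat (𝕜 := ℝ)))

lemma upperDensity_le_of_countUpTo_le {A : Set ℕ} {α C : ℝ}
    (h : ∀ n, (countUpTo A n : ℝ) ≤ α * n + C) : upperDensity A ≤ α := by
  have hle : ∀ᶠ n : ℕ in atTop, (countUpTo A n : ℝ) / n ≤ α + C * (1 / (n : ℝ)) := by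
    filter_upwards [eventually_ge_atTop 1] with n hn
    have hn : (0 : ℝ) < n := by exact_mod_cast hn
    rw [div_le_iff₀ hn]
    calc (countUpTo A n : ℝ) ≤ α * n + C := h n
      _ = (α + C * (1 / (n : ℝ))) * n := by field_simp
  have hcobdd : IsCoboundedUnder (· ≤ ·) atTop fun n : ℕ => (countUpTo A n : ℝ) / n :=
    (isBoundedUnder_of ⟨0, countUpTo_div_nonneg A⟩).isCoboundedUnder_le
  calc upperDensity A ≤ limsup (fun n : ℕ => α + C * (1 / (n : ℝ))) atTop :=
        limsup_le_limsup hle hcobdd (tendsto_add_mul_one_div α C).isBoundedUnder_le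
    _ = α := (tendsto_add_mul_one_div α C).limsup_eq

lemma le_lowerDensity_of_le_countUpTo {A : Set ℕ} {α C : ℝ}
    (h : ∀ n, α * n + C ≤ (countUpTo A n : ℝ)) : α ≤ lowerDensity A := by
  have hle : ∀ᶠ n : ℕ in atTop, α + C * (1 / (n : ℝ)) ≤ (countUpTo A n : ℝ) / n := by
    filter_upwards [eventually_ge_atTop 1] with n hn
    have hn : (0 : ℝ) < n := by exact_mod_cast hn
    rw [le_div_iff₀ hn]
    calc (α + C * (1 / (n : ℝ))) * n = α * n + C := by field_simp
      _ ≤ countUpTo A n := h n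
  have hcobdd : IsCoboundedUnder (· ≥ ·) atTop fun n : ℕ => (countUpTo A n : ℝ) / n :=
    (isBoundedUnder_of ⟨1, countUpTo_div_le_one A⟩).isCoboundedUnder_ge
  calc α = liminf (fun n : ℕ => α + C * (1 / (n : ℝ))) atTop :=
        (tendsto_add_mul_one_div α C).liminf_eq.symm
    _ ≤ lowerDensity A :=
        liminf_le_liminf hle (tendsto_add_mul_one_div α C).isBoundedUnder_ge hcobdd

lemma countUpTo_add_of_mem {A : Set ℕ} {j L m : ℕ} (hm : m ∈ A) (hjm : j < m) (hmL : m ≤ j + L) :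
    countUpTo A j + 1 ≤ countUpTo A (j + L) := by
  have hnotMem : m ∉ (Icc 1 j).filter fun m => m ∈ A := by simp [hjm]
  rw [countUpTo, ← card_insert_of_notMem hnotMem]
  refine card_le_card (insert_subset ?_ (filter_subset_filter _ (Icc_subset_Icc_right (by omega))))
  simp only [mem_filter, mem_Icc]
  exact ⟨⟨by omega, hmL⟩, hm⟩

lemma div_le_countUpTo_of_forall_exists_mem {A : Set ℕ} {L : ℕ}
    (hA : ∀ j, ∃ m ∈ A, j < m ∧ m ≤ j + L) (n : ℕ) : n / L ≤ countUpTo A n := by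
  have hmul : ∀ q, q ≤ countUpTo A (q * L) := by
    intro q
    induction q with
    | zero => exact Nat.zero_le _
    | succ q ih =>
      obtain ⟨m, hm, hjm, hmL⟩ := hA (q * L)
      rw [Nat.succ_mul]
      exact (Nat.succ_le_succ ih).trans (countUpTo_add_of_mem hm hjm hmL)
  exact (hmul _).trans (countUpTo_mono A (Nat.div_mul_le_self n L))

lemma one_div_le_lowerDensity {A : Set ℕ} {L : ℕ} (hL : 0 < L)
    (hA : ∀ j, ∃ m ∈ A, j < m ∧ m ≤ j + L) : 1 / (L : ℝ) ≤ lowerDensity A := by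
  refine le_lowerDensity_of_le_countUpTo (C := -1) fun n => ?_
  have hL' : (0 : ℝ) < L := by exact_mod_cast hL
  have hfloor : (n : ℝ) < L * ((n / L : ℕ) + 1) := by exact_mod_cast Nat.lt_mul_div_succ n hL
  have hcount : ((n / L : ℕ) : ℝ) ≤ countUpTo A n := by
    exact_mod_cast div_le_countUpTo_of_forall_exists_mem hA n
  have : 1 / (L : ℝ) * n < (n / L : ℕ) + 1 := by
    rw [one_div_mul_eq_div, div_lt_iff₀ hL']; linarith
  linarith

lemma nonempty_of_upperDensity_pos {X : Set ℕ} (hX : 0 < upperDensity X) : X.Nonempty := by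
  refine Set.nonempty_iff_ne_empty.2 fun hempty => hX.not_ge ?_
  refine upperDensity_le_of_countUpTo_le (C := 0) fun n => ?_
  simp [countUpTo, hempty]

def diffSet (X : Set ℕ) : Set ℤ := {d | ∃ x ∈ X, ∃ x' ∈ X, d = x - x'}

lemma neg_mem_diffSet {X : Set ℕ} {d : ℤ} (hd : d ∈ diffSet X) : -d ∈ diffSet X := by
  obtain ⟨x, hx, x', hx', rfl⟩ := hd
  exact ⟨x', hx', x, hx, by ring⟩

/-- The translates `t + X`, `t ∈ S`, of an `X`-separated set `S` are pairwise disjoint. -/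
def IsDiffSeparated (X : Set ℕ) (S : Finset ℤ) : Prop :=
  (S : Set ℤ).Pairwise fun t t' => t - t' ∉ diffSet X

lemma card_mul_countUpTo_le {X : Set ℕ} {S : Finset ℤ} (hS : IsDiffSeparated X S) {M : ℕ}
    (hM : ∀ t ∈ S, t.natAbs ≤ M) (n : ℕ) : #S * countUpTo X n ≤ n + 2 * M := by
  have hmaps : Set.MapsTo (fun p : ℤ × ℕ => p.1 + p.2) ↑(S ×ˢ (Icc 1 n).filter (· ∈ X))
      ↑(Icc (1 - M : ℤ) (n + M)) := by
    rintro ⟨t, m⟩ hp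
    simp only [coe_product, Set.mem_prod, mem_coe, mem_filter, mem_Icc] at hp
    have := hM t hp.1
    simp only [coe_Icc, Set.mem_Icc]
    omega
  have hinj : Set.InjOn (fun p : ℤ × ℕ => p.1 + p.2) ↑(S ×ˢ (Icc 1 n).filter (· ∈ X)) := by
    rintro ⟨t, m⟩ hp ⟨t', m'⟩ hp' heq
    simp only [coe_product, Set.mem_prod, mem_coe, mem_filter] at hp hp' heq
    by_cases htt' : t = t'
    · subst htt'
      simp only [Prod.mk.injEq, true_and]
      omega
    · exact absurd ⟨m', hp'.2.2, m, hp.2.2, by omega⟩ (hS hp.1 hp'.1 htt')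
  have := card_le_card_of_injOn _ hmaps hinj
  rw [card_product, Int.card_Icc] at this
  rw [countUpTo]
  omega

lemma card_le_one_div_upperDensity {X : Set ℕ} (hX : 0 < upperDensity X) {S : Finset ℤ}
    (hS : IsDiffSeparated X S) : (#S : ℝ) ≤ 1 / upperDensity X := by
  obtain rfl | hne := S.eq_empty_or_nonempty
  · simpa using hX.le
  have hk : (0 : ℝ) < #S := by exact_mod_cast hne.card_pos
  set M := S.sup Int.natAbs
  have hbound : upperDensity X ≤ 1 / #S := by
    refine upperDensity_le_of_countUpTo_le (C := 2 * M / #S) fun n => ?_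
    have := card_mul_countUpTo_le hS (fun t ht => le_sup (f := Int.natAbs) ht) n
    rw [one_div_mul_eq_div, ← add_div, le_div_iff₀ hk, mul_comm]
    exact_mod_cast this
  exact (le_one_div hX hk).1 hbound

lemma exists_maximal_of_card_le {α : Type*} [DecidableEq α] {P : Finset α → Prop} (h₀ : P ∅)
    {K : ℕ} (hK : ∀ S, P S → #S ≤ K) : ∃ S, P S ∧ ∀ z ∉ S, ¬ P (insert z S) := by
  obtain ⟨S, hS, hmin⟩ := (measure fun S : Finset α => K - #S).wf.has_min {S | P S} ⟨∅, h₀⟩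
  refine ⟨S, hS, fun z hz hins => hmin _ hins ?_⟩
  have hcard := hK _ hins
  show K - #(insert z S) < K - #S
  rw [card_insert_of_notMem hz] at hcard ⊢
  omega

lemma exists_maximal_isDiffSeparated {X : Set ℕ} (hX : 0 < upperDensity X) :
    ∃ T, IsDiffSeparated X T ∧ ∀ z ∉ T, ¬ IsDiffSeparated X (insert z T) :=
  exists_maximal_of_card_le (by simp [IsDiffSeparated]) (K := ⌊1 / upperDensity X⌋₊) fun _ hS =>
    Nat.le_floor (card_le_one_div_upperDensity hX hS)

lemma exists_sub_mem_diffSet_of_maximal {X : Set ℕ} (hX : X.Nonempty) {T : Finset ℤ}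
    (hT : IsDiffSeparated X T) (hmax : ∀ z ∉ T, ¬ IsDiffSeparated X (insert z T)) (z : ℤ) :
    ∃ t ∈ T, z - t ∈ diffSet X := by
  by_cases hz : z ∈ T
  · obtain ⟨x, hx⟩ := hX
    exact ⟨z, hz, x, hx, x, hx, by ring⟩
  have : Std.Symm fun t t' : ℤ => t - t' ∉ diffSet X :=
    ⟨fun t t' h h' => h (by simpa using neg_mem_diffSet h')⟩
  have hins := hmax z hz
  rw [IsDiffSeparated, coe_insert, Set.pairwise_insert_of_symm] at hins
  push Not at hins
  obtain ⟨t, ht, -, hzt⟩ := hins hT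
  exact ⟨t, ht, hzt⟩

lemma one_div_le_lowerDensity_of_forall_exists_sub_mem {X : Set ℕ} {T : Finset ℤ}
    (hT : ∀ z : ℤ, ∃ t ∈ T, z - t ∈ diffSet X) :
    1 / (2 * ((T.sup Int.natAbs : ℕ) : ℝ) + 1) ≤ lowerDensity {n : ℕ | (n : ℤ) ∈ diffSet X} := by
  set M := T.sup Int.natAbs
  have hA : ∀ j : ℕ, ∃ m ∈ {n : ℕ | (n : ℤ) ∈ diffSet X}, j < m ∧ m ≤ j + (2 * M + 1) := by
    intro j
    obtain ⟨t, ht, hd⟩ := hT (j + M + 1)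
    have htM : t.natAbs ≤ M := le_sup (f := Int.natAbs) ht
    refine ⟨(j + M + 1 - t).toNat, ?_, by omega, by omega⟩
    show ((_ : ℕ) : ℤ) ∈ diffSet X
    rwa [Int.toNat_of_nonneg (by omega)]
  exact_mod_cast one_div_le_lowerDensity (by omega) hA

theorem difference_set_syndetic (X : Set ℕ) (hX : 0 < upperDensity X) :
    (∃ T : Finset ℤ, (T.card : ℝ) ≤ 1 / upperDensity X ∧
      ∀ z : ℤ, ∃ t ∈ T, ∃ x ∈ X, ∃ x' ∈ X, z = t + ((x : ℤ) - x')) ∧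
    0 < lowerDensity {n : ℕ | ∃ x ∈ X, ∃ x' ∈ X, (n : ℤ) = (x : ℤ) - x'} := by
  obtain ⟨T, hT, hmax⟩ := exists_maximal_isDiffSeparated hX
  have hcover := exists_sub_mem_diffSet_of_maximal (nonempty_of_upperDensity_pos hX) hT hmax
  refine ⟨⟨T, card_le_one_div_upperDensity hX hT, fun z => ?_⟩, ?_⟩
  · obtain ⟨t, ht, x, hx, x', hx', hd⟩ := hcover z
    exact ⟨t, ht, x, hx, x', hx', by omega⟩
  · exact lt_of_lt_of_le (by positivity) (one_div_le_lowerDensity_of_forall_exists_sub_mem hcover)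
end

section
/- Let G = ℤ/gℤ, a, b coprime positive integers, and U ⊆ G a subset with |aU + bU| = |U|. Then the period of aU + bU equals the period of U, where the period of a set S ⊆ G is the maximal subgroup H with S + H = S. -/
/-!
Write the exponent of the group as `m * n` with `gcd(b, m) = 1 = gcd(a, n)`. For any fibre `F` of
`v ↦ n • v` on `V` and any section `R` of that map, `(v, r) ↦ a • v + b • r` is injective on
`F × R`, whence `|V| ≤ |aV + bV|` for every finite `V`. If `h` is a period of `aU + bU`, then
`V = U ∪ (h + U)` still has `aV + bV ⊆ aU + bU`, so `|aU + bU| = |U|` forces `h + U = U`.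
Conversely, for a period `h` of `U` both `a • h` and `b • h` are periods of `aU + bU`, and Bézout
recovers `h`.
-/

open Finset AddAction Pointwise

theorem Nat.exists_mul_eq_coprime_coprime {a b : ℕ} (hab : a.Coprime b) {e : ℕ} (he : e ≠ 0) :
    ∃ m n, m * n = e ∧ b.Coprime m ∧ a.Coprime n := by
  induction e using Nat.recOnMul with
  | zero => exact absurd rfl he
  | one => exact ⟨1, 1, rfl, coprime_one_right _, coprime_one_right _⟩
  | prime p hp =>
    by_cases hpa : p ∣ a
    · exact ⟨p, 1, mul_one p, (Coprime.coprime_dvd_left hpa hab).symm, coprime_one_right _⟩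
    · exact ⟨1, p, one_mul p, coprime_one_right _, (hp.coprime_iff_not_dvd.2 hpa).symm⟩
  | mul x y hx hy =>
    obtain ⟨m, n, rfl, hm, hn⟩ := hx (left_ne_zero_of_mul he)
    obtain ⟨m', n', rfl, hm', hn'⟩ := hy (right_ne_zero_of_mul he)
    exact ⟨m * m', n * n', by ring, hm.mul_right hm', hn.mul_right hn'⟩

section

variable {G : Type*} [AddCommGroup G]

theorem eq_zero_of_nsmul_eq_zero_of_coprime {c d : ℕ} (hcd : c.Coprime d) {x : G}
    (hc : c • x = 0) (hd : d • x = 0) : x = 0 := by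
  simpa [hcd.gcd_eq_one] using gcd_nsmul_eq_zero.2 ⟨hc, hd⟩

theorem AddSubgroup.mem_of_nsmul_mem_of_coprime (H : AddSubgroup G) {a b : ℕ} (hab : a.Coprime b)
    {h : G} (ha : a • h ∈ H) (hb : b • h ∈ H) : h ∈ H := by
  have hbezout : (a * a.gcdA b + b * a.gcdB b : ℤ) = 1 := by
    rw [← Nat.gcd_eq_gcd_ab, hab.gcd_eq_one, Nat.cast_one]
  have hdecomp : h = a.gcdA b • (a • h) + a.gcdB b • (b • h) :=
    calc h = (a * a.gcdA b + b * a.gcdB b : ℤ) • h := by rw [hbezout, one_zsmul]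
      _ = _ := by module
  rw [hdecomp]
  exact add_mem (zsmul_mem ha _) (zsmul_mem hb _)

/-- The fibres of `v ↦ n • v` are cosets of the `n`-torsion, on which `a •` is injective, while
its image is `m`-torsion, on which `b •` is injective. -/
theorem injOn_nsmul_add_nsmul {a b m n : ℕ} (hbm : b.Coprime m) (han : a.Coprime n)
    (hmn : ∀ x : G, (m * n) • x = 0) {F R : Set G} {x₀ : G} (hF : ∀ v ∈ F, n • v = x₀)
    (hR : Set.InjOn (n • ·) R) : (F ×ˢ R).InjOn fun p => a • p.1 + b • p.2 := by
  rintro ⟨v, r⟩ ⟨hv, hr⟩ ⟨v', r'⟩ ⟨hv', hr'⟩ heq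
  dsimp only at heq hv hr hv' hr'
  have hr_eq : r = r' := by
    refine hR hr hr' (sub_eq_zero.1 (eq_zero_of_nsmul_eq_zero_of_coprime hbm ?_ ?_))
    · have := congrArg (n • ·) heq
      simp only [smul_add, smul_comm n a, hF v hv, hF v' hv'] at this
      rw [smul_sub, smul_comm b n, smul_comm b n, sub_eq_zero]
      exact add_left_cancel this
    · rw [← smul_sub, smul_smul, hmn]
  subst hr_eq
  refine Prod.ext (sub_eq_zero.1 (eq_zero_of_nsmul_eq_zero_of_coprime han ?_ ?_)) rfl
  · rw [smul_sub, sub_eq_zero]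
    exact add_right_cancel heq
  · rw [smul_sub, hF v hv, hF v' hv', sub_self]

variable [DecidableEq G]

theorem card_le_card_image₂_nsmul_add_nsmul (hG : AddMonoid.ExponentExists G) {a b : ℕ}
    (hab : a.Coprime b) (V : Finset G) :
    #V ≤ #(image₂ (fun x y => a • x + b • y) V V) := by
  obtain ⟨e, he, hexp⟩ := hG
  obtain ⟨m, n, rfl, hbm, han⟩ := Nat.exists_mul_eq_coprime_coprime hab he.ne'
  set S := image₂ (fun x y => a • x + b • y) V V
  set W := V.image (n • ·)
  obtain ⟨R, hRV, hRinj, hRW⟩ := exists_subset_injOn_image_eq_of_surjOn (V : Set G) W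
    (by rw [coe_image]; exact Set.surjOn_image _ _)
  have hfibre : ∀ x ∈ W, #{v ∈ V | n • v = x} * #W ≤ #S := by
    intro x _
    calc #{v ∈ V | n • v = x} * #W
        = #(image₂ (fun x y => a • x + b • y) {v ∈ V | n • v = x} R) := by
          rw [card_image₂_iff.2, ← hRW, card_image_of_injOn hRinj]
          exact injOn_nsmul_add_nsmul hbm han hexp (fun v hv => (mem_filter.1 hv).2) hRinj
      _ ≤ #S := card_le_card (image₂_subset (filter_subset _ _) hRV)
  calc #V ≤ #S / #W * #W := card_le_mul_card_image V _ fun x hx =>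
        (Nat.le_div_iff_mul_le (card_pos.2 ⟨x, hx⟩)).2 (hfibre x hx)
    _ ≤ #S := Nat.div_mul_le_self _ _

theorem coe_stabilizer_finset_eq_setOf (S : Finset G) :
    (stabilizer G S : Set G) = {h | S.image (· + h) = S} := by
  ext h
  simp only [SetLike.mem_coe, mem_stabilizer_iff, vadd_finset_def, vadd_eq_add, add_comm h,
    Set.mem_ofPred_eq]

theorem nsmul_mem_stabilizer_image₂ (a b : ℕ) {U : Finset G} {h : G} (hh : h ∈ stabilizer G U) :
    a • h ∈ stabilizer G (image₂ (fun x y => a • x + b • y) U U) ∧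
      b • h ∈ stabilizer G (image₂ (fun x y => a • x + b • y) U U) := by
  simp only [mem_stabilizer_finset', forall_mem_image₂, vadd_eq_add]
  constructor
  · intro u hu u' hu'
    exact mem_image₂.2 ⟨h + u, mem_stabilizer_finset'.1 hh hu, u', hu', by rw [smul_add]; abel⟩
  · intro u hu u' hu'
    exact mem_image₂.2 ⟨u, hu, h + u', mem_stabilizer_finset'.1 hh hu', by rw [smul_add]; abel⟩

theorem stabilizer_le_stabilizer_image₂ {a b : ℕ} (hab : a.Coprime b) (U : Finset G) :
    stabilizer G U ≤ stabilizer G (image₂ (fun x y => a • x + b • y) U U) := fun _ hh =>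
  AddSubgroup.mem_of_nsmul_mem_of_coprime _ hab (nsmul_mem_stabilizer_image₂ a b hh).1
    (nsmul_mem_stabilizer_image₂ a b hh).2

theorem stabilizer_image₂_le_stabilizer (hG : AddMonoid.ExponentExists G) {a b : ℕ}
    (hab : a.Coprime b) (U : Finset G)
    (hcard : #(image₂ (fun x y => a • x + b • y) U U) = #U) :
    stabilizer G (image₂ (fun x y => a • x + b • y) U U) ≤ stabilizer G U := by
  intro h hh
  set S := image₂ (fun x y => a • x + b • y) U U
  set V := ({0, h} : Finset G) + U
  have hVS : image₂ (fun x y => a • x + b • y) V V ⊆ S := by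
    intro z hz
    obtain ⟨_, hv, _, hv', rfl⟩ := mem_image₂.1 hz
    obtain ⟨t, ht, u, hu, rfl⟩ := mem_add.1 hv
    obtain ⟨t', ht', u', hu', rfl⟩ := mem_add.1 hv'
    have hT : ∀ t ∈ ({0, h} : Finset G), t ∈ stabilizer G S := by
      simp only [mem_insert, mem_singleton, forall_eq_or_imp, forall_eq]
      exact ⟨zero_mem _, hh⟩
    have := mem_stabilizer_finset'.1 (add_mem (nsmul_mem (hT t ht) a) (nsmul_mem (hT t' ht') b))
      (mem_image₂_of_mem hu hu')
    rwa [vadd_eq_add, add_add_add_comm, ← smul_add, ← smul_add] at this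
  have hVU : V = U := by
    refine (eq_of_subset_of_card_le (subset_add_right U (by simp)) ?_).symm
    calc #V ≤ #(image₂ (fun x y => a • x + b • y) V V) :=
          card_le_card_image₂_nsmul_add_nsmul hG hab V
      _ ≤ #S := card_le_card hVS
      _ = #U := hcard
  rw [mem_stabilizer_finset_iff_vadd_finset_subset]
  exact (vadd_finset_subset_add (by simp)).trans hVU.subset

theorem stabilizer_image₂_nsmul_add_nsmul (hG : AddMonoid.ExponentExists G) {a b : ℕ}
    (hab : a.Coprime b) (U : Finset G)
    (hcard : #(image₂ (fun x y => a • x + b • y) U U) = #U) :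
    stabilizer G (image₂ (fun x y => a • x + b • y) U U) = stabilizer G U :=
  (stabilizer_image₂_le_stabilizer hG hab U hcard).antisymm
    (stabilizer_le_stabilizer_image₂ hab U)

end

theorem period_preserved_general (g : ℕ) [NeZero g]
    (a b : ℕ) (hab : Nat.Coprime a b)
    (U : Finset (ZMod g))
    (hcard : (Finset.image₂ (fun x y => (a : ZMod g) * x + (b : ZMod g) * y) U U).card = U.card) :
    {h : ZMod g |
        Finset.image (fun x => x + h)
          (Finset.image₂ (fun x y => (a : ZMod g) * x + (b : ZMod g) * y) U U) =
        Finset.image₂ (fun x y => (a : ZMod g) * x + (b : ZMod g) * y) U U} =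
      {h : ZMod g | Finset.image (fun x => x + h) U = U} := by
  have hmul_eq_nsmul : (fun x y : ZMod g => (a : ZMod g) * x + (b : ZMod g) * y) =
      fun x y => a • x + b • y := by
    simp only [nsmul_eq_mul]
  rw [hmul_eq_nsmul] at hcard ⊢
  rw [← coe_stabilizer_finset_eq_setOf, ← coe_stabilizer_finset_eq_setOf,
    stabilizer_image₂_nsmul_add_nsmul .of_finite hab U hcard]

theorem period_preserved (g : ℕ) [NeZero g]
    (a b : ℕ) (ha : 0 < a) (hb : 0 < b) (hab : Nat.Coprime a b)
    (U : Finset (ZMod g))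
    (hcard : (Finset.image₂ (fun x y => (a : ZMod g) * x + (b : ZMod g) * y) U U).card = U.card) :
    {h : ZMod g |
        Finset.image (fun x => x + h)
          (Finset.image₂ (fun x y => (a : ZMod g) * x + (b : ZMod g) * y) U U) =
        Finset.image₂ (fun x y => (a : ZMod g) * x + (b : ZMod g) * y) U U} =
      {h : ZMod g | Finset.image (fun x => x + h) U = U} :=
  period_preserved_general g a b hab U hcard
end
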